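/- Let P be a Łukasiewicz path, a and M a natural number and a finite multiset of natural numbers, and T = τ(P). Then P ∈ L_{a,M} if and only if the root of T has degree a+1 and the multiset of degrees of the non-root internal nodes of T equals M' = [1^{M_0}, 2^{M_1}, 3^{M_2}, ...], where M_k denotes the multiplicity of k in M (i.e., M' is the image of M under the map k ↦ k+1). -/

import Mathlib

/-! ## Plane trees -/

/-- A plane tree: a root together with an ordered (left-to-right) list of subtrees.
A node is a *leaf* if it has no children, and *internal* otherwise. -/
inductive PTree : Type where
  | node : List PTree → PTree


namespace Luka

/-! ## Łukasiewicz paths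

A path is encoded by its list of step increments: the step `(1,k)` (an up-step `U_k` of
degree `k`) is encoded by `k : ℤ` with `k ≥ 0`, and the down step `D = (1,-1)` by `-1`. -/

/-- `P` is a Łukasiewicz path: it is nonempty, uses steps `(1,k)` with `k ≥ -1`,
stays (weakly) above the `x`-axis before its last step, and ends at height `-1`
(so that it goes strictly below the axis only at the last step, which is forced
to be the down-step `D`). -/
def IsLukas (P : List ℤ) : Prop :=
  P ≠ [] ∧ (∀ s ∈ P, -1 ≤ s) ∧ (∀ n, n < P.length → 0 ≤ (P.take n).sum) ∧ P.sum = -1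

/-- The degrees of the up-steps of `P`, from left to right (the *profile* of `P`). -/
def upDegs (P : List ℤ) : List ℕ := (P.filter (fun s => 0 ≤ s)).map Int.toNat

/-- The profile multiset `𝔐(P)`: the multiset of degrees of the up-steps of `P`. -/
def profileM (P : List ℤ) : Multiset ℕ := (upDegs P : Multiset ℕ)

/-- The degree of the first up-step of `P`, if any. -/
def firstUp? (P : List ℤ) : Option ℕ := (upDegs P).head?

/-- The degree of the last up-step of `P`, if any. -/
def lastUp? (P : List ℤ) : Option ℕ := (upDegs P).getLast?

/-- Auxiliary: starting from height `h`, record the starting height of every up-step. -/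
def areaVecAux : ℤ → List ℤ → List ℤ
  | _, [] => []
  | h, s :: rest => (if 0 ≤ s then [h] else []) ++ areaVecAux (h + s) rest

/-- The area vector `Area(P)`: the `i`-th entry is the `y`-coordinate of the starting
point of the `i`-th up-step of `P`. -/
def areaVec (P : List ℤ) : List ℤ := areaVecAux 0 P

/-- `area(P)`: the sum of the entries of the area vector (entries of a Łukasiewicz
path are nonnegative, so taking `Int.toNat` entrywise is harmless). -/
def area (P : List ℤ) : ℕ := ((areaVec P).map Int.toNat).sum

/-- Auxiliary computation of the depth values: `cur` is the depth value of the previous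
step (`0` initially), and `stack` holds the pending depth values of the future matching
down-steps (top of the stack = value for the next matching down-step to come).
Reading an up-step `U_k` whose value is `cur` (inherited from the previous step) pushes
the values `cur+1, …, cur+k` for its `k` matching down-steps (its first matching
down-step, which crosses its topmost interior level, gets `cur+1`, etc.); reading a
down-step pops its value.  The list returned records the value `d_i` of each up-step,
from left to right. -/
def depthVecAux : ℕ → List ℕ → List ℤ → List ℕ
  | _, _, [] => []
  | cur, stack, s :: rest =>
    if 0 ≤ s then
      cur :: depthVecAux cur ((List.range s.toNat).map (fun i => cur + i + 1) ++ stack) rest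
    else
      match stack with
      | [] => depthVecAux cur [] rest
      | v :: st => depthVecAux v st rest

/-- The depth vector `Depth(P)`: the values `d_i` at the up-steps of `P`, left to right. -/
def depthVec (P : List ℤ) : List ℕ := depthVecAux 0 [] P

/-- `depth(P)`: the sum of the entries of the depth vector. -/
def depth (P : List ℤ) : ℕ := (depthVec P).sum

/-- `P ∈ 𝓛_M`. -/
def MemL (M : Multiset ℕ) (P : List ℤ) : Prop := IsLukas P ∧ profileM P = M

/-- `P ∈ 𝓛_{a,M}`: first up-step of degree `a`, profile multiset `M ⊎ {a}`. -/
def MemLa (a : ℕ) (M : Multiset ℕ) (P : List ℤ) : Prop :=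
  IsLukas P ∧ firstUp? P = some a ∧ profileM P = a ::ₘ M

/-- `P ∈ 𝓛_{M,b}`: last up-step of degree `b`, profile multiset `M ⊎ {b}`. -/
def MemLb (M : Multiset ℕ) (b : ℕ) (P : List ℤ) : Prop :=
  IsLukas P ∧ lastUp? P = some b ∧ profileM P = b ::ₘ M

/-- `P ∈ 𝓛_{a,M,b}`: first up-step of degree `a`, last up-step of degree `b`,
profile multiset `M ⊎ {a, b}`. -/
def MemLab (a : ℕ) (M : Multiset ℕ) (b : ℕ) (P : List ℤ) : Prop :=
  IsLukas P ∧ firstUp? P = some a ∧ lastUp? P = some b ∧ profileM P = a ::ₘ b ::ₘ M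

/-! ## Plane-tree statistics -/

/-- The (ordered) children of the root of a plane tree. -/
def children : PTree → List PTree
  | .node ts => ts

/-- The degree of (the root of) a plane tree: its number of children. -/
def numChildren (t : PTree) : ℕ := (children t).length

mutual
/-- Number of internal nodes of a plane tree. -/
def internCount : PTree → ℕ
  | .node [] => 0
  | .node (t :: ts) => 1 + internCountL (t :: ts)
def internCountL : List PTree → ℕ
  | [] => 0
  | t :: ts => internCount t + internCountL ts
end

mutual
/-- `lthornT T` = the sum of `lthorn(u)` over all internal nodes `u` of `T`, where
`lthorn(u)` is the number of descending edges of strict ancestors `v` of `u` lying to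
the left of the path from `v` to `u`.  (Every internal node of the subtree rooted at
the `i`-th child (0-indexed) of a node gains `i` left thorns from that node.) -/
def lthornT : PTree → ℕ
  | .node ts => lthornL 0 ts
def lthornL : ℕ → List PTree → ℕ
  | _, [] => 0
  | i, t :: ts => lthornT t + i * internCount t + lthornL (i + 1) ts
end

mutual
/-- `rthornT T` = the sum of `rthorn(u)` over all internal nodes `u` of `T`, where
`rthorn(u)` is the number of descending edges of strict ancestors `v` of `u` lying to
the right of the path from `v` to `u`. -/
def rthornT : PTree → ℕ
  | .node ts => rthornL ts
def rthornL : List PTree → ℕ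
  | [] => 0
  | t :: ts => rthornT t + ts.length * internCount t + rthornL ts
end

mutual
/-- The list of the values `lthorn(u)` for the internal nodes `u` of `T`, in
contour-walk (preorder) order. -/
def lthornList : PTree → List ℕ
  | .node [] => []
  | .node (t :: ts) => 0 :: lthornLL 0 (t :: ts)
def lthornLL : ℕ → List PTree → List ℕ
  | _, [] => []
  | i, t :: ts => (lthornList t).map (· + i) ++ lthornLL (i + 1) ts
end

mutual
/-- The list of the values `rthorn(u)` for the internal nodes `u` of `T`, in
contour-walk (preorder) order. -/
def rthornList : PTree → List ℕ
  | .node [] => []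
  | .node (t :: ts) => 0 :: rthornLL (t :: ts)
def rthornLL : List PTree → List ℕ
  | [] => []
  | t :: ts => (rthornList t).map (· + ts.length) ++ rthornLL ts
end

/-! ## The bijections `λ` and `τ` -/

mutual
/-- `λ`: record each node of the tree at its first visit in the left-to-right contour
walk: `U_k` (i.e. `k`) for an internal node with `k+1` children, `D` (i.e. `-1`)
for a leaf. -/
def lambdaT : PTree → List ℤ
  | .node ts => ((ts.length : ℤ) - 1) :: lambdaL ts
def lambdaL : List PTree → List ℤ
  | [] => []
  | t :: ts => lambdaT t ++ lambdaL ts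
end

/-- Auxiliary for `τ`: reading the path from right to left, maintain the stack of the
already-built subtrees (in left-to-right order); a down-step `D` creates a leaf and an
up-step `U_k` grabs the `k+1` topmost subtrees as its children.  This builds the same
tree as the left-to-right "leftmost bud" construction. -/
def tauStack (P : List ℤ) : List PTree :=
  P.foldr (fun s st =>
    if s < 0 then PTree.node [] :: st
    else PTree.node (st.take (s.toNat + 1)) :: st.drop (s.toNat + 1)) []

/-- `τ`: the plane tree associated with a Łukasiewicz path. -/
def tau (P : List ℤ) : PTree := (tauStack P).headD (.node [])

mutual
/-- The mirror of a plane tree: reverse the left-to-right order of the children of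
every internal node. -/
def mir : PTree → PTree
  | .node ts => .node (mirL ts).reverse
def mirL : List PTree → List PTree
  | [] => []
  | t :: ts => mir t :: mirL ts
end

mutual
/-- The subtrees rooted at the internal nodes of `T`, in contour-walk (preorder)
order. -/
def internalSubtrees : PTree → List PTree
  | .node [] => []
  | .node (t :: ts) => .node (t :: ts) :: internalSubtreesL (t :: ts)
def internalSubtreesL : List PTree → List PTree
  | [] => []
  | t :: ts => internalSubtrees t ++ internalSubtreesL ts
end

/-- The multiset of degrees of the non-root internal nodes of `T`. -/
def nonRootInternalDegs (T : PTree) : Multiset ℕ :=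
  (((internalSubtreesL (children T)).map numChildren : List ℕ) : Multiset ℕ)

/-! ## Lodestars and the lodestar swap -/

/-- A node is a lodestar-type node if it is internal and all its children are leaves. -/
def isLodestarNode (t : PTree) : Bool :=
  !(children t).isEmpty && (children t).all (fun c => (children c).isEmpty)

mutual
/-- The subtree rooted at the *left lodestar* of `T`: the first internal node, in
contour-walk (preorder) order, all of whose children are leaves (if it exists). -/
def leftLode? : PTree → Option PTree
  | .node ts =>
    if isLodestarNode (.node ts) then some (.node ts) else leftLodeL? ts
def leftLodeL? : List PTree → Option PTree
  | [] => none
  | t :: ts =>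
    match leftLode? t with
    | some r => some r
    | none => leftLodeL? ts
end

mutual
/-- The subtree rooted at the *right lodestar* of `T`: the last internal node, in
contour-walk (preorder) order, all of whose children are leaves (if it exists). -/
def rightLode? : PTree → Option PTree
  | .node ts =>
    match rightLodeL? ts with
    | some r => some r
    | none => if isLodestarNode (.node ts) then some (.node ts) else none
def rightLodeL? : List PTree → Option PTree
  | [] => none
  | t :: ts =>
    match rightLodeL? ts with
    | some r => some r
    | none => rightLode? t
end

mutual
/-- Replace the left lodestar of `T` (first preorder all-leaf-children internal node)
by the tree `r`; `none` if `T` has no internal node. -/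
def replF : PTree → PTree → Option PTree
  | r, .node ts =>
    if isLodestarNode (.node ts) then some r
    else (replFL r ts).map PTree.node
def replFL : PTree → List PTree → Option (List PTree)
  | _, [] => none
  | r, t :: ts =>
    match replF r t with
    | some t' => some (t' :: ts)
    | none => (replFL r ts).map (t :: ·)
end

mutual
/-- Replace the right lodestar of `T` (last preorder all-leaf-children internal node)
by the tree `r`; `none` if `T` has no internal node. -/
def replL : PTree → PTree → Option PTree
  | r, .node ts =>
    match replLL r ts with
    | some ts' => some (.node ts')
    | none => if isLodestarNode (.node ts) then some r else none
def replLL : PTree → List PTree → Option (List PTree)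
  | _, [] => none
  | r, t :: ts =>
    match replLL r ts with
    | some ts' => some (t :: ts')
    | none => (replL r t).map (· :: ts)
end

/-- The lodestar swap: exchange the subtrees rooted at the left lodestar and the
right lodestar of `T` (each a node together with its pendant leaves). -/
def lodeSwap (T : PTree) : PTree :=
  match leftLode? T, rightLode? T with
  | some L, some R => ((replF R T).bind (replL L)).getD T
  | _, _ => T

end Luka

/-!
Reading a plane tree in preorder (`λ`) recovers the path: `λ (τ P) = P` for every
Łukasiewicz path `P`.  Under `λ` an internal node with `k + 1` children becomes the up-step
`U_k`, so the up-steps of `P`, shifted by one, list the degrees of the internal nodes of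
`τ P` in preorder.  The first of them is the root, and the others are the non-root
internal nodes.
-/

namespace Luka

theorem upDegs_cons (s : ℤ) (P : List ℤ) :
    upDegs (s :: P) = if 0 ≤ s then s.toNat :: upDegs P else upDegs P := by
  by_cases h : 0 ≤ s <;> simp [upDegs, h]

theorem upDegs_append (P Q : List ℤ) : upDegs (P ++ Q) = upDegs P ++ upDegs Q := by
  simp [upDegs]

theorem lambdaL_append (ts us : List PTree) : lambdaL (ts ++ us) = lambdaL ts ++ lambdaL us := by
  induction ts with
  | nil => rfl
  | cons t ts ih => simp [lambdaL, ih]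

mutual
theorem map_succ_upDegs_lambdaT (T : PTree) :
    (upDegs (lambdaT T)).map (· + 1) = (internalSubtrees T).map numChildren := by
  match T with
  | .node [] => rfl
  | .node (t :: ts) =>
    rw [lambdaT, upDegs_cons, if_pos (by simp), internalSubtrees, List.map_cons,
      List.map_cons, map_succ_upDegs_lambdaL (t :: ts)]
    simp [numChildren, children]
termination_by sizeOf T
theorem map_succ_upDegs_lambdaL (ts : List PTree) :
    (upDegs (lambdaL ts)).map (· + 1) = (internalSubtreesL ts).map numChildren := by
  match ts with
  | [] => rfl
  | t :: ts =>
    rw [lambdaL, upDegs_append, internalSubtreesL, List.map_append, List.map_append,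
      map_succ_upDegs_lambdaT t, map_succ_upDegs_lambdaL ts]
termination_by sizeOf ts
end

theorem internalSubtrees_eq_nil {T : PTree} (h : numChildren T = 0) :
    internalSubtrees T = [] := by
  obtain ⟨_ | _⟩ := T
  · rfl
  · simp [numChildren, children] at h

theorem map_numChildren_internalSubtrees {T : PTree} (h : numChildren T ≠ 0) :
    (internalSubtrees T).map numChildren =
      numChildren T :: (internalSubtreesL (children T)).map numChildren := by
  obtain ⟨_ | _⟩ := T
  · simp [numChildren, children] at h
  · rfl

theorem tauStack_cons (s : ℤ) (P : List ℤ) :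
    tauStack (s :: P) = if s < 0 then PTree.node [] :: tauStack P
      else PTree.node ((tauStack P).take (s.toNat + 1)) :: (tauStack P).drop (s.toNat + 1) :=
  rfl

theorem length_tauStack {P : List ℤ} (hsteps : ∀ s ∈ P, -1 ≤ s)
    (hsuf : ∀ Q, Q <:+ P → Q ≠ [] → Q.sum ≤ -1) : ((tauStack P).length : ℤ) = -P.sum := by
  induction P with
  | nil => rfl
  | cons s P ih =>
    obtain ⟨hs, hsteps⟩ := List.forall_mem_cons.mp hsteps
    have hsum := hsuf _ List.suffix_rfl (List.cons_ne_nil s P)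
    have hlen := ih hsteps fun Q hQ => hsuf Q (hQ.trans (List.suffix_cons s P))
    rw [tauStack_cons]
    split_ifs <;> simp only [List.length_cons, List.length_drop, List.sum_cons] at hsum ⊢ <;> omega

theorem lambdaL_tauStack {P : List ℤ} (hsteps : ∀ s ∈ P, -1 ≤ s)
    (hsuf : ∀ Q, Q <:+ P → Q ≠ [] → Q.sum ≤ -1) : lambdaL (tauStack P) = P := by
  induction P with
  | nil => rfl
  | cons s P ih =>
    obtain ⟨hs, hsteps⟩ := List.forall_mem_cons.mp hsteps
    have hsum := hsuf _ List.suffix_rfl (List.cons_ne_nil s P)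
    replace hsuf := fun Q hQ => hsuf Q (List.IsSuffix.trans hQ (List.suffix_cons s P))
    have hlen := length_tauStack hsteps hsuf
    rw [List.sum_cons] at hsum
    rw [tauStack_cons]
    split_ifs
    · show lambdaT (.node []) ++ lambdaL (tauStack P) = s :: P
      simp only [lambdaT, lambdaL, ih hsteps hsuf, List.length_nil, List.cons_append,
        List.nil_append]
      congr 1
      omega
    · show lambdaT (.node _) ++ lambdaL ((tauStack P).drop (s.toNat + 1)) = s :: P
      rw [lambdaT, List.cons_append, ← lambdaL_append, List.take_append_drop, ih hsteps hsuf,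
        List.length_take, Nat.min_eq_left (by omega)]
      congr 1
      omega

theorem lambdaT_tau {P : List ℤ} (hP : IsLukas P) : lambdaT (tau P) = P := by
  obtain ⟨-, hsteps, hpre, hsum⟩ := hP
  have hsuf : ∀ Q, Q <:+ P → Q ≠ [] → Q.sum ≤ -1 := by
    rintro Q ⟨R, rfl⟩ hQ
    have := hpre R.length (by simpa using List.length_pos_iff.mpr hQ)
    simp only [List.take_left', List.sum_append] at this hsum
    omega
  obtain ⟨T, hT⟩ : ∃ T, tauStack P = [T] := by
    have := length_tauStack hsteps hsuf
    exact List.length_eq_one_iff.mp (by omega)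
  simpa [tau, hT, lambdaL] using lambdaL_tauStack hsteps hsuf

end Luka

open Luka in
/-- Let `P` be a Łukasiewicz path and `T = τ(P)`.  Then `P ∈ 𝓛_{a,M}` if and only if
the root of `T` has degree `a + 1` and the multiset of degrees of the non-root internal
nodes of `T` is the image of `M` under `k ↦ k + 1`
(that is, `M' = [1^{M_0}, 2^{M_1}, 3^{M_2}, …]`). -/
theorem memLa_iff_tree_characterization (P : List ℤ) (a : ℕ) (M : Multiset ℕ)
    (hP : IsLukas P) :
    MemLa a M P ↔
      numChildren (tau P) = a + 1 ∧
      nonRootInternalDegs (tau P) = M.map (fun k => k + 1) := by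
  have hdegs := map_succ_upDegs_lambdaT (tau P)
  rw [lambdaT_tau hP] at hdegs
  by_cases hleaf : numChildren (tau P) = 0
  · rw [internalSubtrees_eq_nil hleaf, List.map_nil, List.map_eq_nil_iff] at hdegs
    simp [MemLa, firstUp?, hdegs, hleaf]
  · rw [map_numChildren_internalSubtrees hleaf, List.map_eq_cons_iff] at hdegs
    obtain ⟨d, D, hPD, hd, hD⟩ := hdegs
    rw [nonRootInternalDegs, ← hD, MemLa, firstUp?, profileM, hPD, ← hd]
    simp only [hP, List.head?_cons, Option.some.injEq, add_left_inj, true_and]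
    refine and_congr_right fun hda => ?_
    subst hda
    rw [← Multiset.cons_coe, Multiset.cons_inj_right, ← Multiset.map_coe,
      (Multiset.map_injective (add_left_injective 1)).eq_iff]
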